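/- Let d : ℝ → M₄(ℂ) be a self-consistent trajectory and set 𝔷(t) := Tr(d(t)·A↓A↑). Then 𝔷 is differentiable and satisfies the linear ODE 𝔷′(t) = i·(2(μ−λ) + γ·(1 − Tr(d(t)·(n↑+n↓))))·𝔷(t) for every t ∈ ℝ. -/

import Mathlib

open Matrix
open scoped ComplexOrder

noncomputable section

/-- `M₄(ℂ)`, the algebra of 4×4 complex matrices, identified with the linear
operators on the one-site fermionic Fock space `ℂ⁴`. -/
abbrev M4 : Type := Matrix (Fin 4) (Fin 4) ℂ

noncomputable instance : NormedAddCommGroup M4 := Matrix.normedAddCommGroup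
noncomputable instance : NormedSpace ℝ M4 := Matrix.normedSpace

/-- The canonical anticommutation relations for the two matrices `A↑ = Aup`,
`A↓ = Adn`: `Aₛ·Aₜ + Aₜ·Aₛ = 0` and `Aₛ·Aₜ* + Aₜ*·Aₛ = δ_{s,t}·1` for
`s, t ∈ {↑,↓}`. -/
def CAR (Aup Adn : M4) : Prop :=
  Aup * Aup + Aup * Aup = 0 ∧
  Aup * Adn + Adn * Aup = 0 ∧
  Adn * Adn + Adn * Adn = 0 ∧
  Aup * Aupᴴ + Aupᴴ * Aup = 1 ∧
  Aup * Adnᴴ + Adnᴴ * Aup = 0 ∧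
  Adn * Aupᴴ + Aupᴴ * Adn = 0 ∧
  Adn * Adnᴴ + Adnᴴ * Adn = 1

/-- `dh(c) := 2λ n↑n↓ − μ(n↑+n↓) − h(n↑−n↓) − γ(c·A↑*A↓* + c̄·A↓A↑)`,
where `nₛ := Aₛ*·Aₛ`. -/
def dh (Aup Adn : M4) (mu h lam gam : ℝ) (c : ℂ) : M4 :=
  (2 * lam : ℂ) • (Aupᴴ * Aup * (Adnᴴ * Adn))
    - (mu : ℂ) • (Aupᴴ * Aup + Adnᴴ * Adn)
    - (h : ℂ) • (Aupᴴ * Aup - Adnᴴ * Adn)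
    - (gam : ℂ) • (c • (Aupᴴ * Adnᴴ) + (starRingEnd ℂ c) • (Adn * Aup))

/-- A density matrix: Hermitian, positive semidefinite, of trace 1. -/
def IsDensityMatrix (d : M4) : Prop :=
  d.IsHermitian ∧ d.PosSemidef ∧ d.trace = 1

/-- A self-consistent trajectory: a differentiable map `d : ℝ → M₄(ℂ)` such that
`d t` is a density matrix for all `t` and
`d′(t) = −i·[dh(Tr(d(t)·A↓A↑)), d(t)]` for all `t ∈ ℝ`. -/
def SelfConsistent (Aup Adn : M4) (mu h lam gam : ℝ) (d : ℝ → M4) : Prop :=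
  (∀ t : ℝ, IsDensityMatrix (d t)) ∧
  ∀ t : ℝ, HasDerivAt d
      ((-Complex.I) •
        (dh Aup Adn mu h lam gam ((d t * (Adn * Aup)).trace) * d t
          - d t * dh Aup Adn mu h lam gam ((d t * (Adn * Aup)).trace))) t

/-!
Write `B = A↓A↑` (`pair` in lemma names). Since `𝔷 = Tr(d B)`, the equation of motion gives
`𝔷' = -i Tr([dh, d] B) = -i Tr(d [B, dh])`. The commutator with `B` is a derivation, and the CAR give
`[B, A↑] = [B, A↓] = 0`, `[B, A↑*] = A↓`, `[B, A↓*] = -A↑`. Hence `[B, n↑] = [B, n↓] = B`, with `A↑² = A↓² = 0`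
also `[B, n↑n↓] = B`, and `[B, A↑*A↓*] = 1 - n↑ - n↓`, so `[B, dh(c)] = 2(λ - μ) B - γ c (1 - n↑ - n↓)`;
taking `Tr(d ·)` with `Tr d = 1` yields the linear equation for `𝔷`.
-/

attribute [local instance] LieRing.ofAssociativeRing

namespace Ring

variable {R : Type*} [Ring R]

theorem lie_mul (x y z : R) : ⁅x, y * z⁆ = ⁅x, y⁆ * z + y * ⁅x, z⁆ := by
  simp only [lie_def]
  noncomm_ring

theorem mul_lie (x y z : R) : ⁅x * y, z⁆ = x * (y * z + z * y) - (x * z + z * x) * y := by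
  simp only [lie_def]
  noncomm_ring

end Ring

theorem Matrix.trace_lie_mul {n R : Type*} [Fintype n] [CommRing R] (A B C : Matrix n n R) :
    trace (⁅A, B⁆ * C) = trace (B * ⁅C, A⁆) := by
  simp only [Ring.lie_def, sub_mul, mul_sub, trace_sub, mul_assoc]
  rw [trace_mul_comm A, mul_assoc]

theorem HasDerivAt.trace_mul_const {f : ℝ → M4} {f' : M4} {t : ℝ} (hf : HasDerivAt f f' t)
    (B : M4) : HasDerivAt (fun s => trace (f s * B)) (trace (f' * B)) t :=
  let L : M4 →L[ℝ] ℂ := LinearMap.toContinuousLinearMap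
    (((traceLinearMap (Fin 4) ℂ ℂ).comp (LinearMap.mulRight ℂ B)).restrictScalars ℝ)
  L.hasFDerivAt.comp_hasDerivAt t hf

namespace CAR

variable {U V : M4}

theorem up_mul_up (hCAR : CAR U V) : U * U = 0 := by
  have h : (2 : ℂ) • (U * U) = 0 := by rw [two_smul]; exact hCAR.1
  exact (smul_eq_zero.1 h).resolve_left two_ne_zero

theorem dn_mul_dn (hCAR : CAR U V) : V * V = 0 := by
  have h : (2 : ℂ) • (V * V) = 0 := by rw [two_smul]; exact hCAR.2.2.1
  exact (smul_eq_zero.1 h).resolve_left two_ne_zero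

theorem up_mul_dn (hCAR : CAR U V) : U * V = -(V * U) :=
  eq_neg_of_add_eq_zero_left hCAR.2.1

theorem lie_pair_up (hCAR : CAR U V) : ⁅V * U, U⁆ = 0 := by
  obtain ⟨hUU, hUV, -⟩ := hCAR
  rw [Ring.mul_lie, hUU, add_comm, hUV, mul_zero, zero_mul, sub_zero]

theorem lie_pair_dn (hCAR : CAR U V) : ⁅V * U, V⁆ = 0 := by
  obtain ⟨-, hUV, hVV, -⟩ := hCAR
  rw [Ring.mul_lie, hUV, hVV, mul_zero, zero_mul, sub_zero]

theorem lie_pair_upH (hCAR : CAR U V) : ⁅V * U, Uᴴ⁆ = V := by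
  obtain ⟨-, -, -, hUUs, -, hVUs, -⟩ := hCAR
  rw [Ring.mul_lie, hUUs, hVUs, mul_one, zero_mul, sub_zero]

theorem lie_pair_dnH (hCAR : CAR U V) : ⁅V * U, Vᴴ⁆ = -U := by
  obtain ⟨-, -, -, -, hUVs, -, hVVs⟩ := hCAR
  rw [Ring.mul_lie, hUVs, hVVs, mul_zero, one_mul, zero_sub]

theorem lie_pair_nUp (hCAR : CAR U V) : ⁅V * U, Uᴴ * U⁆ = V * U := by
  rw [Ring.lie_mul, hCAR.lie_pair_upH, hCAR.lie_pair_up, mul_zero, add_zero]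

theorem lie_pair_nDn (hCAR : CAR U V) : ⁅V * U, Vᴴ * V⁆ = V * U := by
  rw [Ring.lie_mul, hCAR.lie_pair_dnH, hCAR.lie_pair_dn, mul_zero, add_zero, neg_mul,
    hCAR.up_mul_dn, neg_neg]

theorem nUp_mul_pair (hCAR : CAR U V) : Uᴴ * U * (V * U) = 0 := by
  rw [mul_assoc, ← mul_assoc U, hCAR.up_mul_dn, neg_mul, mul_assoc, hCAR.up_mul_up]
  simp

theorem nDn_mul_pair (hCAR : CAR U V) : Vᴴ * V * (V * U) = 0 := by
  rw [mul_assoc, ← mul_assoc V, hCAR.dn_mul_dn, zero_mul, mul_zero]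

theorem lie_pair_nUp_mul_nDn (hCAR : CAR U V) :
    ⁅V * U, Uᴴ * U * (Vᴴ * V)⁆ = V * U := by
  have hpair_nDn : V * U * (Vᴴ * V) = V * U := by
    simpa only [Ring.lie_def, hCAR.nDn_mul_pair, sub_zero] using hCAR.lie_pair_nDn
  rw [Ring.lie_mul, hCAR.lie_pair_nUp, hCAR.lie_pair_nDn, hpair_nDn,
    hCAR.nUp_mul_pair, add_zero]

theorem lie_pair_pairH (hCAR : CAR U V) : ⁅V * U, Uᴴ * Vᴴ⁆ = 1 - Uᴴ * U - Vᴴ * V := by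
  rw [Ring.lie_mul, hCAR.lie_pair_upH, hCAR.lie_pair_dnH, eq_sub_of_add_eq hCAR.2.2.2.2.2.2]
  noncomm_ring

theorem lie_pair_dh (hCAR : CAR U V) (mu h lam gam : ℝ) (c : ℂ) :
    ⁅V * U, dh U V mu h lam gam c⁆
      = (2 * (lam - mu) : ℂ) • (V * U) - (gam * c) • (1 - Uᴴ * U - Vᴴ * V) := by
  simp only [dh, lie_sub, lie_add, lie_smul, hCAR.lie_pair_nUp_mul_nDn, hCAR.lie_pair_nUp,
    hCAR.lie_pair_nDn, hCAR.lie_pair_pairH, lie_self, smul_zero]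
  module

end CAR

theorem cooper_field_ode (Aup Adn : M4) (hCAR : CAR Aup Adn)
    (mu h lam gam : ℝ)
    (d : ℝ → M4) (hd : SelfConsistent Aup Adn mu h lam gam d) :
    ∀ t : ℝ, HasDerivAt (fun s : ℝ => (d s * (Adn * Aup)).trace)
      (Complex.I * ((2 * (mu - lam) : ℂ)
          + (gam : ℂ) * (1 - (d t * (Aupᴴ * Aup + Adnᴴ * Adn)).trace))
        * (d t * (Adn * Aup)).trace) t := by
  intro t
  obtain ⟨hdensity, hode⟩ := hd
  convert (hode t).trace_mul_const (Adn * Aup) using 1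
  rw [← Ring.lie_def, smul_mul_assoc, trace_smul, trace_lie_mul, hCAR.lie_pair_dh]
  simp only [mul_sub, mul_add, mul_smul_comm, mul_one, trace_sub, trace_add, trace_smul,
    (hdensity t).2.2, smul_eq_mul]
  ring
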